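/- Vertical parity is preserved by the horizontal update: if c is a configuration such that every pair of signals (cells with state ≥ 4) lies at even vertical distance (i.e., for all signals x, y, the second coordinate of x - y is even), then F(c,H) has the same property. -/

import Mathlib

inductive Letter | H | V
deriving DecidableEq, BEq

/-- Horizontal neighborhood `N_h(x) = {x, x+(1,0), x-(1,0)}`. -/
def Nh (x : ℤ × ℤ) : Finset (ℤ × ℤ) := {x, x + (1, 0), x - (1, 0)}

/-- Vertical neighborhood `N_v(x) = {x, x+(0,1), x-(0,1)}`. -/
def Nv (x : ℤ × ℤ) : Finset (ℤ × ℤ) := {x, x + (0, 1), x - (0, 1)}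

/-- The horizontal update of the fungal automaton. -/
def upH (c : ℤ × ℤ → ℤ) (x : ℤ × ℤ) : ℤ :=
  c x - 2 * (if 4 ≤ c x then 1 else 0) + ∑ y ∈ Nh x, (if 4 ≤ c y then 1 else 0)

/-- The vertical update of the fungal automaton. -/
def upV (c : ℤ × ℤ → ℤ) (x : ℤ × ℤ) : ℤ :=
  c x - 2 * (if 4 ≤ c x then 1 else 0) + ∑ y ∈ Nv x, (if 4 ≤ c y then 1 else 0)


/-! A cell can only become a signal under the horizontal update if some cell of its horizontal
neighbourhood already is one: otherwise the update leaves it unchanged. That neighbour lies in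
the same row, so the rows of new signals are rows of old signals and vertical parity survives. -/

lemma snd_eq_of_mem_Nh {x z : ℤ × ℤ} (hz : z ∈ Nh x) : z.2 = x.2 := by
  simp only [Nh, Finset.mem_insert, Finset.mem_singleton] at hz
  rcases hz with rfl | rfl | rfl <;> simp

lemma upH_eq_self_of_forall_mem_Nh_lt (c : ℤ × ℤ → ℤ) {x : ℤ × ℤ}
    (h : ∀ y ∈ Nh x, c y < 4) : upH c x = c x := by
  have hx : ¬ 4 ≤ c x := not_le.2 (h x (by simp [Nh]))
  have hsum : ∑ y ∈ Nh x, (if 4 ≤ c y then (1 : ℤ) else 0) = 0 :=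
    Finset.sum_eq_zero fun y hy => if_neg (not_le.2 (h y hy))
  simp only [upH, hsum, if_neg hx]
  ring

lemma exists_mem_Nh_signal_of_le_upH (c : ℤ × ℤ → ℤ) {x : ℤ × ℤ} (h : 4 ≤ upH c x) :
    ∃ z ∈ Nh x, 4 ≤ c z := by
  by_contra! hno
  have hx := hno x (by simp [Nh])
  rw [upH_eq_self_of_forall_mem_Nh_lt c hno] at h
  omega

lemma exists_signal_same_row_of_le_upH (c : ℤ × ℤ → ℤ) {x : ℤ × ℤ} (h : 4 ≤ upH c x) :
    ∃ z, 4 ≤ c z ∧ z.2 = x.2 :=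
  let ⟨z, hz, hsig⟩ := exists_mem_Nh_signal_of_le_upH c h
  ⟨z, hsig, snd_eq_of_mem_Nh hz⟩

theorem stmt5_general (c : ℤ × ℤ → ℤ)
    (hvpp : ∀ x y : ℤ × ℤ, 4 ≤ c x → 4 ≤ c y → (x - y).2 % 2 = 0) :
    ∀ x y : ℤ × ℤ, 4 ≤ upH c x → 4 ≤ upH c y → (x - y).2 % 2 = 0 := by
  intro x y hx hy
  obtain ⟨zx, hzx, hrow_x⟩ := exists_signal_same_row_of_le_upH c hx
  obtain ⟨zy, hzy, hrow_y⟩ := exists_signal_same_row_of_le_upH c hy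
  have hpar : (zx.2 - zy.2) % 2 = 0 := hvpp zx zy hzx hzy
  rw [Prod.snd_sub, ← hrow_x, ← hrow_y]
  exact hpar

/-- The vertical parity property is preserved by the horizontal update. -/
theorem stmt5 (c : ℤ × ℤ → ℤ) (hrange : ∀ x, 0 ≤ c x ∧ c x ≤ 5)
    (hvpp : ∀ x y : ℤ × ℤ, 4 ≤ c x → 4 ≤ c y → (x - y).2 % 2 = 0) :
    ∀ x y : ℤ × ℤ, 4 ≤ upH c x → 4 ≤ upH c y → (x - y).2 % 2 = 0 :=
  stmt5_general c hvpp
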